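/- arXiv:2101.00717 — 4 statements merged into one kernel-verified Lean document; each statement's English description precedes it below -/
import Mathlib

section
/- Fix real numbers β, α₁, …, αₙ and u₁, …, uₙ. Then lim_{ℏ→+∞} log_ℏ(ℏ^β + ∑_{i=1}^n ℏ^{α_i} · ℏ^{u_i}) = max(β, max_{i=1,…,n}(α_i + u_i)). In other words, in log-log coordinates the rectified linear unit with positive weights a_i = ℏ^{α_i} and bias b = ℏ^β degenerates, in the tropical limit ℏ → ∞, to the tropical unit σ^tr(u) = max{β, max_i{α_i + u_i}}. -/
/-- In log-log coordinates, the ReLU with positive weights `a_i = ℏ^{α_i}`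
and bias `b = ℏ^β` degenerates in the tropical limit `ℏ → ∞` to the tropical
unit `σ^tr(u) = max (β, max_i (α_i + u_i))`. -/
theorem tropical_degeneration_of_ReLU (n : ℕ) (hn : 0 < n)
    (β : ℝ) (α u : Fin n → ℝ) :
    Filter.Tendsto
      (fun ℏ : ℝ => Real.logb ℏ (ℏ ^ β + ∑ i, ℏ ^ α i * ℏ ^ u i))
      Filter.atTop
      (nhds (max β
        (Finset.univ.sup'
          (Finset.univ_nonempty_iff.mpr (Fin.pos_iff_nonempty.mp hn))
          (fun i => α i + u i)))) := by
  have hne : (Finset.univ : Finset (Fin n)).Nonempty :=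
    Finset.univ_nonempty_iff.mpr (Fin.pos_iff_nonempty.mp hn)
  set M : ℝ := max β (Finset.univ.sup' hne (fun i => α i + u i)) with hM
  -- the limit of the upper bound
  have hzero : Filter.Tendsto (fun ℏ : ℝ => Real.logb ℏ ((n : ℝ) + 1))
      Filter.atTop (nhds 0) := by
    have : Filter.Tendsto (fun ℏ : ℝ => Real.log ((n : ℝ) + 1) / Real.log ℏ)
        Filter.atTop (nhds 0) :=
      Filter.Tendsto.div_atTop tendsto_const_nhds Real.tendsto_log_atTop
    simpa [Real.logb] using this
  have hupper : Filter.Tendsto (fun ℏ : ℝ => M + Real.logb ℏ ((n : ℝ) + 1))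
      Filter.atTop (nhds M) := by
    simpa using tendsto_const_nhds.add hzero
  refine tendsto_of_tendsto_of_tendsto_of_le_of_le' (tendsto_const_nhds) hupper ?_ ?_
  · -- lower bound: eventually M ≤ logb ℏ (...)
    filter_upwards [Filter.eventually_gt_atTop (1 : ℝ)] with ℏ hℏ
    have hℏ0 : (0 : ℝ) < ℏ := lt_trans one_pos hℏ
    have hsum_ge : ℏ ^ M ≤ ℏ ^ β + ∑ i, ℏ ^ α i * ℏ ^ u i := by
      obtain ⟨j, -, hj⟩ := Finset.exists_mem_eq_sup' hne (fun i => α i + u i)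
      have hpos : ∀ i ∈ (Finset.univ : Finset (Fin n)), 0 ≤ ℏ ^ α i * ℏ ^ u i := by
        intro i _
        positivity
      rcases max_choice β (Finset.univ.sup' hne (fun i => α i + u i)) with h | h
      · calc ℏ ^ M = ℏ ^ β := by rw [hM, h]
          _ ≤ ℏ ^ β + ∑ i, ℏ ^ α i * ℏ ^ u i := by
              have := Finset.sum_nonneg hpos
              linarith
      · have hMj : M = α j + u j := by rw [hM, h, hj]
        calc ℏ ^ M = ℏ ^ α j * ℏ ^ u j := by
              rw [hMj, Real.rpow_add hℏ0]
          _ ≤ ∑ i, ℏ ^ α i * ℏ ^ u i :=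
              Finset.single_le_sum hpos (Finset.mem_univ j)
          _ ≤ ℏ ^ β + ∑ i, ℏ ^ α i * ℏ ^ u i := by
              have : (0:ℝ) ≤ ℏ ^ β := (Real.rpow_pos_of_pos hℏ0 β).le
              linarith
    calc M = Real.logb ℏ (ℏ ^ M) := (Real.logb_rpow hℏ0 (by exact hℏ.ne')).symm
      _ ≤ Real.logb ℏ (ℏ ^ β + ∑ i, ℏ ^ α i * ℏ ^ u i) :=
          Real.logb_le_logb_of_le hℏ (Real.rpow_pos_of_pos hℏ0 M) hsum_ge
  · -- upper bound
    filter_upwards [Filter.eventually_gt_atTop (1 : ℝ)] with ℏ hℏ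
    have hℏ0 : (0 : ℝ) < ℏ := lt_trans one_pos hℏ
    have hsum_le : ℏ ^ β + ∑ i, ℏ ^ α i * ℏ ^ u i ≤ ((n : ℝ) + 1) * ℏ ^ M := by
      have hβ : ℏ ^ β ≤ ℏ ^ M :=
        Real.rpow_le_rpow_of_exponent_le hℏ.le (le_max_left _ _)
      have hi : ∀ i ∈ (Finset.univ : Finset (Fin n)),
          ℏ ^ α i * ℏ ^ u i ≤ ℏ ^ M := by
        intro i _
        rw [← Real.rpow_add hℏ0]
        exact Real.rpow_le_rpow_of_exponent_le hℏ.le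
          (le_trans (Finset.le_sup' (fun i => α i + u i) (Finset.mem_univ i)) (le_max_right _ _))
      have : ∑ i, ℏ ^ α i * ℏ ^ u i ≤ (n : ℝ) * ℏ ^ M := by
        calc ∑ i, ℏ ^ α i * ℏ ^ u i ≤ ∑ _i : Fin n, ℏ ^ M := Finset.sum_le_sum hi
          _ = (n : ℝ) * ℏ ^ M := by simp [Finset.sum_const, nsmul_eq_mul]
      linarith [this, hβ]
    have hpos : (0 : ℝ) < ℏ ^ β + ∑ i, ℏ ^ α i * ℏ ^ u i := by
      have : (0:ℝ) < ℏ ^ β := Real.rpow_pos_of_pos hℏ0 β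
      have h2 : (0:ℝ) ≤ ∑ i, ℏ ^ α i * ℏ ^ u i :=
        Finset.sum_nonneg (by intro i _; positivity)
      linarith
    calc Real.logb ℏ (ℏ ^ β + ∑ i, ℏ ^ α i * ℏ ^ u i)
        ≤ Real.logb ℏ (((n : ℝ) + 1) * ℏ ^ M) :=
          Real.logb_le_logb_of_le hℏ hpos hsum_le
      _ = M + Real.logb ℏ ((n : ℝ) + 1) := by
          rw [Real.logb_mul (by positivity) (Real.rpow_pos_of_pos hℏ0 M).ne',
            Real.logb_rpow hℏ0 hℏ.ne', add_comm]
end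

section
/- Let V ⊂ ℕⁿ be a nonempty finite set of exponent vectors and let c_j > 0 for each j ∈ V, and consider the polynomial P(x) = ∑_{j∈V} c_j x₁^{j₁}⋯xₙ^{jₙ}. Then for every u ∈ ℝⁿ, lim_{ℏ→+∞} log_ℏ P(ℏ^{u₁}, …, ℏ^{uₙ}) = max_{j∈V} ∑_{k=1}^n j_k u_k; that is, the Maslov dequantization of a polynomial with positive coefficients converges pointwise to the associated tropical polynomial. -/
/-- Maslov dequantization of a polynomial with positive coefficients converges
pointwise to the associated tropical polynomial: for a nonempty finite set
`V ⊂ ℕⁿ` of exponent vectors, positive coefficients `c_j`, and `u ∈ ℝⁿ`,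
`log_ℏ P(ℏ^{u₁}, …, ℏ^{uₙ}) → max_{j ∈ V} ∑_k j_k u_k` as `ℏ → +∞`. -/
theorem dequantization_of_polynomial (n : ℕ) (V : Finset (Fin n → ℕ))
    (hV : V.Nonempty) (c : (Fin n → ℕ) → ℝ) (hc : ∀ j ∈ V, 0 < c j)
    (u : Fin n → ℝ) :
    Filter.Tendsto
      (fun ℏ : ℝ => Real.logb ℏ (∑ j ∈ V, c j * ∏ k, (ℏ ^ u k) ^ (j k)))
      Filter.atTop
      (nhds (V.sup' hV fun j => ∑ k, (j k : ℝ) * u k)) := by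
  set M : ℝ := V.sup' hV fun j => ∑ k, (j k : ℝ) * u k with hM
  obtain ⟨j0, hj0V, hj0⟩ := Finset.exists_mem_eq_sup' hV fun j => ∑ k, (j k : ℝ) * u k
  -- rewrite the sum as ∑ c j * ℏ ^ (e j) for ℏ > 1
  have key : ∀ ℏ : ℝ, 1 < ℏ → ∀ j : Fin n → ℕ,
      (∏ k, (ℏ ^ u k) ^ (j k)) = ℏ ^ (∑ k, (j k : ℝ) * u k) := by
    intro ℏ hℏ j
    rw [Real.rpow_sum_of_pos (by linarith)]
    refine Finset.prod_congr rfl fun k _ => ?_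
    rw [← Real.rpow_natCast (ℏ ^ u k) (j k), ← Real.rpow_mul (by linarith),
      mul_comm]
  have hCsum : 0 < ∑ j ∈ V, c j := Finset.sum_pos hc hV
  -- squeeze
  have lo : Filter.Tendsto (fun ℏ : ℝ => Real.logb ℏ (c j0) + M)
      Filter.atTop (nhds M) := by
    have : Filter.Tendsto (fun ℏ : ℝ => Real.logb ℏ (c j0)) Filter.atTop (nhds 0) := by
      simpa [Real.logb] using
        (tendsto_const_nhds (x := Real.log (c j0))).div_atTop Real.tendsto_log_atTop
    simpa using this.add tendsto_const_nhds
  have hi : Filter.Tendsto (fun ℏ : ℝ => Real.logb ℏ (∑ j ∈ V, c j) + M)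
      Filter.atTop (nhds M) := by
    have : Filter.Tendsto (fun ℏ : ℝ => Real.logb ℏ (∑ j ∈ V, c j)) Filter.atTop (nhds 0) := by
      simpa [Real.logb] using
        (tendsto_const_nhds (x := Real.log (∑ j ∈ V, c j))).div_atTop Real.tendsto_log_atTop
    simpa using this.add tendsto_const_nhds
  refine tendsto_of_tendsto_of_tendsto_of_le_of_le' lo hi ?_ ?_ <;>
    filter_upwards [Filter.eventually_gt_atTop (1 : ℝ)] with ℏ hℏ
  · -- lower bound
    have hpos : 0 < c j0 * ℏ ^ M :=
      mul_pos (hc j0 hj0V) (Real.rpow_pos_of_pos (by linarith) _)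
    have hsum_pos : 0 < ∑ j ∈ V, c j * ∏ k, (ℏ ^ u k) ^ (j k) := by
      refine Finset.sum_pos (fun j hj => mul_pos (hc j hj) ?_) hV
      rw [key ℏ hℏ j]; exact Real.rpow_pos_of_pos (by linarith) _
    have hle : c j0 * ℏ ^ M ≤ ∑ j ∈ V, c j * ∏ k, (ℏ ^ u k) ^ (j k) := by
      have : c j0 * ℏ ^ M = c j0 * ∏ k, (ℏ ^ u k) ^ (j0 k) := by
        rw [key ℏ hℏ j0, hM, hj0]
      rw [this]
      refine Finset.single_le_sum (f := fun j => c j * ∏ k, (ℏ ^ u k) ^ (j k)) (fun j hj => ?_) hj0V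
      have : (0:ℝ) < ∏ k, (ℏ ^ u k) ^ (j k) := by
        rw [key ℏ hℏ j]; exact Real.rpow_pos_of_pos (by linarith) _
      exact (mul_pos (hc j hj) this).le
    calc Real.logb ℏ (c j0) + M
        = Real.logb ℏ (c j0 * ℏ ^ M) := by
          rw [Real.logb_mul (hc j0 hj0V).ne' (Real.rpow_pos_of_pos (by linarith) _).ne',
            Real.logb_rpow (by linarith) (by linarith)]
      _ ≤ _ := (Real.logb_le_logb hℏ hpos hsum_pos).mpr hle
  · -- upper bound
    have hsum_pos : 0 < ∑ j ∈ V, c j * ∏ k, (ℏ ^ u k) ^ (j k) := by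
      refine Finset.sum_pos (fun j hj => mul_pos (hc j hj) ?_) hV
      rw [key ℏ hℏ j]; exact Real.rpow_pos_of_pos (by linarith) _
    have hpos : 0 < (∑ j ∈ V, c j) * ℏ ^ M :=
      mul_pos hCsum (Real.rpow_pos_of_pos (by linarith) _)
    have hle : (∑ j ∈ V, c j * ∏ k, (ℏ ^ u k) ^ (j k)) ≤ (∑ j ∈ V, c j) * ℏ ^ M := by
      rw [Finset.sum_mul]
      refine Finset.sum_le_sum fun j hj => ?_
      rw [key ℏ hℏ j]
      refine mul_le_mul_of_nonneg_left ?_ (hc j hj).le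
      exact (Real.rpow_le_rpow_left_iff hℏ).mpr (le_of_le_of_eq (Finset.le_sup' (fun j => ∑ k, (j k : ℝ) * u k) hj) hM.symm)
    calc Real.logb ℏ (∑ j ∈ V, c j * ∏ k, (ℏ ^ u k) ^ (j k))
        ≤ Real.logb ℏ ((∑ j ∈ V, c j) * ℏ ^ M) :=
          (Real.logb_le_logb hℏ hsum_pos hpos).mpr hle
      _ = Real.logb ℏ (∑ j ∈ V, c j) + M := by
          rw [Real.logb_mul hCsum.ne' (Real.rpow_pos_of_pos (by linarith) _).ne',
            Real.logb_rpow (by linarith) (by linarith)]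
end

section
/- Let K ⊂ ℝⁿ be a compact set, f : K → ℝ continuous, and ε > 0. Then there exist N ∈ ℕ, real numbers β₁, …, β_N, b₁, …, b_N, and vectors a₁, …, a_N ∈ ℝⁿ such that for all x ∈ K, |f(x) − ∑_{i=1}^N β_i · max(0, b_i + ⟨a_i, x⟩)| ≤ ε. That is, one-hidden-layer feedforward neural networks with the rectified linear unit activation are universal approximators of continuous functions on compact domains in ℝⁿ. -/
open Finset

set_option maxHeartbeats 1000000 in

lemma relu_approx_1d (g : ℝ → ℝ) (hg : Continuous g) (M : ℝ) (hM : 0 < M)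
    (ε : ℝ) (hε : 0 < ε) :
    ∃ (N : ℕ) (β b c : Fin N → ℝ), ∀ t ∈ Set.Icc (-M) M,
      |g t - ∑ i, β i * max 0 (b i + c i * t)| ≤ ε := by
  obtain ⟨δ, hδ, hmod⟩ : ∃ δ > 0, ∀ u ∈ Set.Icc (-M) M, ∀ v ∈ Set.Icc (-M) M,
      dist u v < δ → dist (g u) (g v) < ε/2 := by
    have := (isCompact_Icc (a := -M) (b := M)).uniformContinuousOn_of_continuous
      hg.continuousOn
    rw [Metric.uniformContinuousOn_iff] at this
    exact this (ε/2) (by linarith)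
  obtain ⟨m, hm⟩ := exists_nat_gt (2*M/δ)
  have hm0 : 0 < m := by
    have : (0:ℝ) < m := lt_of_le_of_lt (by positivity) hm
    exact_mod_cast this
  have hm0' : (0:ℝ) < m := by exact_mod_cast hm0
  set h := 2*M/m with hh_def
  have hh : 0 < h := by positivity
  have hhδ : h < δ := by
    rw [hh_def, div_lt_iff₀ hm0']
    have := (div_lt_iff₀ hδ).mp hm
    nlinarith
  have mh : (m:ℝ) * h = 2*M := by
    rw [hh_def]; field_simp
  set node : ℕ → ℝ := fun k => -M + k*h with hnode_def
  have hnode : ∀ k : ℕ, node (k+1) = node k + h := by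
    intro k; simp only [hnode_def]; push_cast; ring
  set s : ℕ → ℝ := fun k => (g (node (k+1)) - g (node k))/h with hs_def
  set γ : ℕ → ℝ := fun k => if k = 0 then s 0 else s k - s (k-1) with hγ_def
  have hsmul : ∀ k, s k * h = g (node (k+1)) - g (node k) := by
    intro k; simp only [hs_def]; field_simp
  have key : ∀ j, ∀ t : ℝ,
      g (node 0) + ∑ k ∈ range (j+1), γ k * (t - node k)
        = g (node j) + s j * (t - node j) := by
    intro j
    induction j with
    | zero => intro t; simp [hγ_def]
    | succ j ih =>
      intro t
      rw [sum_range_succ]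
      have hγj : γ (j+1) = s (j+1) - s j := by simp [hγ_def]
      rw [hγj]
      linear_combination ih t + hsmul j + s j * hnode j
  have hmono : ∀ k l : ℕ, k ≤ l → node k ≤ node l := by
    intro k l hkl
    simp only [hnode_def]
    have : (k:ℝ) ≤ l := by exact_mod_cast hkl
    nlinarith
  refine ⟨m+1, Fin.cons (g (node 0)) (fun k : Fin m => γ k),
    Fin.cons 1 (fun k : Fin m => -(node k)), Fin.cons 0 (fun _ => 1), ?_⟩
  intro t ht
  obtain ⟨ht1, ht2⟩ := ht
  have htM : 0 ≤ t + M := by linarith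
  -- choose the interval index
  set j : ℕ := min ⌊(t+M)/h⌋₊ (m-1) with hj_def
  have hj1 : j + 1 ≤ m := by omega
  have hjt : node j ≤ t := by
    rcases le_or_gt ⌊(t+M)/h⌋₊ (m-1) with hc | hc
    · have hj : j = ⌊(t+M)/h⌋₊ := min_eq_left hc
      have h1 : (j:ℝ) ≤ (t+M)/h := by rw [hj]; exact Nat.floor_le (by positivity)
      have h2 : (j:ℝ) * h ≤ t + M := by
        rw [← le_div_iff₀ hh]; linarith [h1]
      simp only [hnode_def]; linarith
    · have hj : j = m-1 := min_eq_right hc.le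
      have hmf : m ≤ ⌊(t+M)/h⌋₊ := by omega
      have h1 : (m:ℝ) ≤ (t+M)/h := by
        rw [← Nat.le_floor_iff (by positivity)]; exact hmf
      have h2 : (m:ℝ) * h ≤ t + M := by rw [← le_div_iff₀ hh]; linarith
      have h3 : M ≤ t := by nlinarith
      have : node j ≤ node m := hmono _ _ (by omega)
      have hnm : node m = M := by simp only [hnode_def]; linarith
      linarith [this, hnm ▸ this]
  have htj : t ≤ node (j+1) := by
    rcases le_or_gt ⌊(t+M)/h⌋₊ (m-1) with hc | hc
    · have hj : j = ⌊(t+M)/h⌋₊ := min_eq_left hc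
      have h1 : (t+M)/h < j + 1 := by
        rw [hj]; have := Nat.lt_floor_add_one ((t+M)/h); push_cast at this ⊢; linarith
      have h2 : t + M < ((j:ℝ) + 1) * h := by
        rw [← div_lt_iff₀ hh]; linarith
      simp only [hnode_def]; push_cast; nlinarith
    · have hj : j + 1 = m := by omega
      rw [hj]
      simp only [hnode_def]; nlinarith
  have hjI : node j ∈ Set.Icc (-M) M := by
    constructor
    · simp only [hnode_def]
      have : (0:ℝ) ≤ (j:ℝ) := Nat.cast_nonneg j
      nlinarith
    · have := hmono j m (by omega)
      simp only [hnode_def] at this ⊢; nlinarith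
  have hj1I : node (j+1) ∈ Set.Icc (-M) M := by
    constructor
    · simp only [hnode_def]
      have : (0:ℝ) ≤ ((j:ℕ)+1:ℕ) := Nat.cast_nonneg _
      push_cast at this
      nlinarith
    · have := hmono (j+1) m hj1
      simp only [hnode_def] at this ⊢; nlinarith
  -- evaluate the network
  have hval : ∑ i : Fin (m+1),
      (Fin.cons (g (node 0)) (fun k : Fin m => γ k) : Fin (m+1) → ℝ) i *
        max 0 ((Fin.cons 1 (fun k : Fin m => -(node k)) : Fin (m+1) → ℝ) i +
          (Fin.cons 0 (fun _ => 1) : Fin (m+1) → ℝ) i * t)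
      = g (node j) + s j * (t - node j) := by
    rw [Fin.sum_univ_succ]
    simp only [Fin.cons_zero, Fin.cons_succ]
    have e1 : max 0 ((1:ℝ) + 0 * t) = 1 := by norm_num
    rw [e1, mul_one]
    have harg : ∀ k : ℕ, -(node k) + 1 * t = t - node k := by intro k; ring
    have e2 : ∑ i : Fin m, γ i * max 0 (-(node i) + 1 * t)
        = ∑ k ∈ range m, γ k * max 0 (t - node k) := by
      simp only [harg]
      exact Fin.sum_univ_eq_sum_range (fun k => γ k * max 0 (t - node k)) m
    rw [e2]
    have e3 : ∑ k ∈ range m, γ k * max 0 (t - node k)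
        = ∑ k ∈ range (j+1), γ k * (t - node k) := by
      rw [← Finset.sum_range_add_sum_Ico _ hj1]
      have z : ∑ k ∈ Finset.Ico (j+1) m, γ k * max 0 (t - node k) = 0 := by
        apply Finset.sum_eq_zero
        intro k hk
        have : t ≤ node k := le_trans htj (hmono _ _ (Finset.mem_Ico.mp hk).1)
        rw [max_eq_left (by linarith)]
        ring
      rw [z, add_zero]
      apply Finset.sum_congr rfl
      intro k hk
      have hk' : k ≤ j := by have := Finset.mem_range.mp hk; omega
      have : node k ≤ t := le_trans (hmono _ _ hk') hjt
      rw [max_eq_right (by linarith)]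
    rw [e3]
    exact key j t
  rw [hval]
  -- error bound
  have hb1 : |g t - g (node j)| < ε/2 := by
    have := hmod t ⟨ht1, ht2⟩ (node j) hjI ?_
    · exact this
    · rw [Real.dist_eq]
      have : t - node j ≤ h := by
        have := hnode j; linarith [htj]
      rw [abs_of_nonneg (by linarith [hjt])]
      linarith
  have hb2 : |s j| * |t - node j| ≤ ε/2 := by
    have habs : |s j| * h = |g (node (j+1)) - g (node j)| := by
      simp only [hs_def]
      rw [abs_div, abs_of_pos hh, div_mul_cancel₀ _ hh.ne']
    have hd : |g (node (j+1)) - g (node j)| < ε/2 := by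
      have := hmod (node (j+1)) hj1I (node j) hjI ?_
      · rwa [Real.dist_eq] at this
      · rw [Real.dist_eq, hnode j]
        rw [abs_of_nonneg (by linarith)]
        linarith
    have h1 : |t - node j| ≤ h := by
      rw [abs_of_nonneg (by linarith)]
      have := hnode j; linarith
    calc |s j| * |t - node j| ≤ |s j| * h := by
          apply mul_le_mul_of_nonneg_left h1 (abs_nonneg _)
      _ = |g (node (j+1)) - g (node j)| := habs
      _ ≤ ε/2 := hd.le
  calc |g t - (g (node j) + s j * (t - node j))|
      = |(g t - g (node j)) - s j * (t - node j)| := by congr 1; ring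
    _ ≤ |g t - g (node j)| + |s j * (t - node j)| := abs_sub _ _
    _ ≤ |g t - g (node j)| + |s j| * |t - node j| := by rw [abs_mul]
    _ ≤ ε := by linarith

/-- The ReLU network as a continuous map on `K`. -/
noncomputable def reluNet (n : ℕ) (K : Set (Fin n → ℝ)) (N : ℕ)
    (β b : Fin N → ℝ) (a : Fin N → Fin n → ℝ) : C(K, ℝ) :=
  ⟨fun x => ∑ i, β i * max 0 (b i + ∑ j, a i j * x.1 j), by
    apply continuous_finset_sum
    intro i _
    apply Continuous.mul continuous_const
    apply Continuous.max continuous_const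
    apply Continuous.add continuous_const
    apply continuous_finset_sum
    intro j _
    exact continuous_const.mul ((continuous_apply j).comp continuous_subtype_val)⟩

/-- The cosine ridge function as a continuous map on `K`. -/
noncomputable def cosRidge (n : ℕ) (K : Set (Fin n → ℝ)) (a : Fin n → ℝ) (θ : ℝ) : C(K, ℝ) :=
  ⟨fun x => Real.cos ((∑ j, a j * x.1 j) + θ), by
    apply Real.continuous_cos.comp
    apply Continuous.add ?_ continuous_const
    apply continuous_finset_sum
    intro j _
    exact continuous_const.mul ((continuous_apply j).comp continuous_subtype_val)⟩

/-- ReLU networks form a submodule of `C(K, ℝ)`. -/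
noncomputable def reluSubmodule (n : ℕ) (K : Set (Fin n → ℝ)) : Submodule ℝ C(K, ℝ) where
  carrier := {F | ∃ (N : ℕ) (β b : Fin N → ℝ) (a : Fin N → Fin n → ℝ), F = reluNet n K N β b a}
  zero_mem' := ⟨0, ![], ![], ![], by ext x; simp [reluNet]⟩
  add_mem' := by
    rintro F G ⟨N₁, β₁, b₁, a₁, rfl⟩ ⟨N₂, β₂, b₂, a₂, rfl⟩
    refine ⟨N₁ + N₂, Fin.append β₁ β₂, Fin.append b₁ b₂, Fin.append a₁ a₂, ?_⟩
    ext x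
    simp only [ContinuousMap.add_apply, reluNet, ContinuousMap.coe_mk]
    rw [Fin.sum_univ_add]
    simp [Fin.append_left, Fin.append_right]
  smul_mem' := by
    rintro c F ⟨N, β, b, a, rfl⟩
    refine ⟨N, c • β, b, a, ?_⟩
    ext x
    simp only [ContinuousMap.smul_apply, reluNet, ContinuousMap.coe_mk, Pi.smul_apply,
      smul_eq_mul]
    rw [Finset.mul_sum]
    apply Finset.sum_congr rfl
    intro i _
    ring

/-- One-hidden-layer feedforward neural networks with ReLU activation are
universal approximators: for every compact `K ⊆ ℝⁿ`, every continuous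
`f : K → ℝ` and every `ε > 0`, there is a finite linear combination of
rectified linear units approximating `f` within `ε` on `K`. -/
theorem relu_universal_approximation (n : ℕ) (K : Set (Fin n → ℝ))
    (hK : IsCompact K) (f : (Fin n → ℝ) → ℝ) (hf : ContinuousOn f K)
    (ε : ℝ) (hε : 0 < ε) :
    ∃ (N : ℕ) (β b : Fin N → ℝ) (a : Fin N → Fin n → ℝ),
      ∀ x ∈ K, |f x - ∑ i, β i * max 0 (b i + ∑ j, a i j * x j)| ≤ ε := by
  rcases K.eq_empty_or_nonempty with hKe | hKne
  · exact ⟨0, ![], ![], ![], by simp [hKe]⟩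
  haveI : Nonempty K := hKne.to_subtype
  haveI : CompactSpace K := isCompact_iff_compactSpace.mp hK
  -- the target as a continuous map on K
  set F : C(K, ℝ) := ⟨K.restrict f, hf.restrict⟩ with hF_def
  -- Step 1: every cosine ridge function is a uniform limit of ReLU networks
  have hcos_mem : ∀ (a : Fin n → ℝ) (θ : ℝ),
      cosRidge n K a θ ∈ closure (reluSubmodule n K : Set C(K, ℝ)) := by
    intro a θ
    rw [Metric.mem_closure_iff]
    intro ε' hε'
    obtain ⟨C, hC⟩ := hK.exists_bound_of_continuousOn (f := fun x => ∑ j, a j * x j)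
      (continuousOn_finset_sum _ fun j _ =>
        (continuousOn_const.mul ((continuous_apply j).continuousOn)))
    set M := max C 1 with hM_def
    have hM : 0 < M := lt_of_lt_of_le one_pos (le_max_right _ _)
    obtain ⟨N, β, b, c, hnet⟩ := relu_approx_1d (fun t => Real.cos (t + θ))
      (Real.continuous_cos.comp (continuous_id.add continuous_const)) M hM
      (ε'/2) (by linarith)
    refine ⟨reluNet n K N β b (fun i => c i • a), ⟨N, β, b, _, rfl⟩, ?_⟩
    have hdist : dist (cosRidge n K a θ) (reluNet n K N β b (fun i => c i • a)) ≤ ε'/2 := by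
      rw [ContinuousMap.dist_le (by linarith)]
      intro x
      rw [Real.dist_eq]
      have hsum : ∀ i, ∑ j, (c i • a) j * x.1 j = c i * ∑ j, a j * x.1 j := by
        intro i
        rw [Finset.mul_sum]
        apply Finset.sum_congr rfl
        intro j _
        simp [Pi.smul_apply, smul_eq_mul]; ring
      simp only [cosRidge, reluNet, ContinuousMap.coe_mk]
      have hCx := hC x.1 x.2
      rw [Real.norm_eq_abs, abs_le] at hCx
      have hx : (∑ j, a j * x.1 j) ∈ Set.Icc (-M) M := by
        constructor
        · have hMC : -M ≤ -C := neg_le_neg (le_max_left C 1)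
          linarith [hCx.1]
        · exact le_trans hCx.2 (le_max_left C 1)
      have := hnet _ hx
      simp only [hsum]
      exact this
    linarith [hdist, hε']
  -- Step 2: the span of cosine ridge functions
  set S : Set C(K, ℝ) := {g | ∃ a θ, g = cosRidge n K a θ} with hS_def
  have hmulS : ∀ p ∈ S, ∀ q ∈ S, p * q ∈ Submodule.span ℝ S := by
    rintro p ⟨a, θ, rfl⟩ q ⟨a', θ', rfl⟩
    have hprod : cosRidge n K a θ * cosRidge n K a' θ' =
        (1/2 : ℝ) • cosRidge n K (a + a') (θ + θ')
          + (1/2 : ℝ) • cosRidge n K (a - a') (θ - θ') := by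
      ext x
      simp only [ContinuousMap.mul_apply, ContinuousMap.add_apply, ContinuousMap.smul_apply,
        cosRidge, ContinuousMap.coe_mk, smul_eq_mul]
      have h1 : ∑ j, (a + a') j * x.1 j = (∑ j, a j * x.1 j) + ∑ j, a' j * x.1 j := by
        rw [← Finset.sum_add_distrib]
        apply Finset.sum_congr rfl
        intro j _
        simp [add_mul]
      have h2 : ∑ j, (a - a') j * x.1 j = (∑ j, a j * x.1 j) - ∑ j, a' j * x.1 j := by
        rw [← Finset.sum_sub_distrib]
        apply Finset.sum_congr rfl
        intro j _
        simp [sub_mul]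
      have key2 : ∀ p q : ℝ, Real.cos p * Real.cos q
          = 1/2 * Real.cos (p+q) + 1/2 * Real.cos (p-q) := by
        intro p q
        rw [Real.cos_add, Real.cos_sub]
        ring
      rw [h1, h2]
      have e1 : (∑ j, a j * x.1 j) + (∑ j, a' j * x.1 j) + (θ + θ')
          = ((∑ j, a j * x.1 j) + θ) + ((∑ j, a' j * x.1 j) + θ') := by ring
      have e2 : (∑ j, a j * x.1 j) - (∑ j, a' j * x.1 j) + (θ - θ')
          = ((∑ j, a j * x.1 j) + θ) - ((∑ j, a' j * x.1 j) + θ') := by ring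
      rw [e1, e2]
      exact key2 _ _
    rw [hprod]
    exact Submodule.add_mem _
      (Submodule.smul_mem _ _ (Submodule.subset_span ⟨_, _, rfl⟩))
      (Submodule.smul_mem _ _ (Submodule.subset_span ⟨_, _, rfl⟩))
  have honeS : (1 : C(K, ℝ)) ∈ Submodule.span ℝ S := by
    apply Submodule.subset_span
    refine ⟨0, 0, ?_⟩
    ext x
    simp [cosRidge]
  have hmul : ∀ p q : C(K, ℝ), p ∈ Submodule.span ℝ S → q ∈ Submodule.span ℝ S →
      p * q ∈ Submodule.span ℝ S := by
    intro p q hp hq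
    refine Submodule.span_induction ?_ ?_ ?_ ?_ hp
    · intro p' hp'
      refine Submodule.span_induction ?_ ?_ ?_ ?_ hq
      · intro q' hq'
        exact hmulS p' hp' q' hq'
      · rw [mul_zero]; exact Submodule.zero_mem _
      · intro u v _ _ hu hv
        rw [mul_add]; exact Submodule.add_mem _ hu hv
      · intro c u _ hu
        rw [mul_smul_comm]; exact Submodule.smul_mem _ _ hu
    · rw [zero_mul]; exact Submodule.zero_mem _
    · intro u v _ _ hu hv
      rw [add_mul]; exact Submodule.add_mem _ hu hv
    · intro c u _ hu
      rw [smul_mul_assoc]; exact Submodule.smul_mem _ _ hu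
  set A : Subalgebra ℝ C(K, ℝ) := (Submodule.span ℝ S).toSubalgebra honeS hmul with hA_def
  have hAS : (A : Set C(K, ℝ)) = (Submodule.span ℝ S : Set C(K, ℝ)) := rfl
  -- A separates points
  have hsep : A.SeparatesPoints := by
    intro x y hxy
    have hv : (x : Fin n → ℝ) ≠ (y : Fin n → ℝ) := fun hh => hxy (Subtype.ext hh)
    obtain ⟨j₀, hj₀⟩ : ∃ j, (x : Fin n → ℝ) j ≠ (y : Fin n → ℝ) j := by
      by_contra hcon
      push_neg at hcon
      exact hv (funext hcon)
    set d : ℝ := ∑ j, ((x : Fin n → ℝ) j - (y : Fin n → ℝ) j)^2 with hd_def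
    have hd : 0 < d := by
      apply Finset.sum_pos' (fun j _ => sq_nonneg _)
      refine ⟨j₀, Finset.mem_univ _, ?_⟩
      have := sub_ne_zero.mpr hj₀
      positivity
    set a : Fin n → ℝ := fun j => (Real.pi/(2*d)) * ((x : Fin n → ℝ) j - (y : Fin n → ℝ) j)
      with ha_def
    set u : ℝ := ∑ j, a j * (x : Fin n → ℝ) j with hu_def
    set v : ℝ := ∑ j, a j * (y : Fin n → ℝ) j with hv_def
    have huv : u - v = Real.pi/2 := by
      rw [hu_def, hv_def, ← Finset.sum_sub_distrib]
      have he : ∀ j ∈ Finset.univ, a j * (x : Fin n → ℝ) j - a j * (y : Fin n → ℝ) j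
          = (Real.pi/(2*d)) * ((x : Fin n → ℝ) j - (y : Fin n → ℝ) j)^2 := by
        intro j _
        rw [ha_def]
        ring
      rw [Finset.sum_congr rfl he, ← Finset.mul_sum, ← hd_def]
      field_simp
    set θ : ℝ := Real.pi - u with hθ_def
    refine ⟨cosRidge n K a θ, ⟨cosRidge n K a θ, ?_, rfl⟩, ?_⟩
    · rw [hAS]
      exact Submodule.subset_span ⟨a, θ, rfl⟩
    · have hxval : (cosRidge n K a θ) x = -1 := by
        simp only [cosRidge, ContinuousMap.coe_mk, ← hu_def, hθ_def]
        have : u + (Real.pi - u) = Real.pi := by ring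
        rw [this, Real.cos_pi]
      have hyval : (cosRidge n K a θ) y = 0 := by
        simp only [cosRidge, ContinuousMap.coe_mk, ← hv_def, hθ_def]
        have : v + (Real.pi - u) = Real.pi/2 := by linarith [huv]
        rw [this, Real.cos_pi_div_two]
      rw [hxval, hyval]
      norm_num
  -- Stone–Weierstrass
  have hA_top : A.topologicalClosure = ⊤ :=
    ContinuousMap.subalgebra_topologicalClosure_eq_top_of_separatesPoints A hsep
  have hF : F ∈ closure (A : Set C(K, ℝ)) := by
    rw [← Subalgebra.topologicalClosure_coe, hA_top]
    trivial
  -- F is in the closure of the ReLU submodule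
  have hFmem : F ∈ closure ((reluSubmodule n K) : Set C(K, ℝ)) := by
    have hSsub : S ⊆ ((reluSubmodule n K).topologicalClosure : Set C(K, ℝ)) := by
      rintro g ⟨a, θ, rfl⟩
      rw [Submodule.topologicalClosure_coe]
      exact hcos_mem a θ
    have hspan : (Submodule.span ℝ S : Set C(K, ℝ))
        ⊆ ((reluSubmodule n K).topologicalClosure : Set C(K, ℝ)) :=
      Submodule.span_le.mpr hSsub
    have := closure_mono hspan hF
    rwa [Submodule.topologicalClosure_coe, closure_closure] at this
  rw [Metric.mem_closure_iff] at hFmem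
  obtain ⟨G, hG, hdist⟩ := hFmem ε hε
  obtain ⟨N, β, b, a, rfl⟩ := hG
  refine ⟨N, β, b, a, ?_⟩
  intro x hx
  have hd := ContinuousMap.dist_apply_le_dist (f := F) (g := reluNet n K N β b a) ⟨x, hx⟩
  have : dist (F ⟨x, hx⟩) (reluNet n K N β b a ⟨x, hx⟩) < ε := lt_of_le_of_lt hd hdist
  rw [Real.dist_eq] at this
  exact le_of_lt this
end

section
/- Let c < d be real numbers, f : [c, d] → ℝ continuous, and ε > 0. Then there exist N ∈ ℕ and real numbers β₁, …, β_N, b₁, …, b_N, a₁, …, a_N such that for all x ∈ [c, d], |f(x) − ∑_{i=1}^N β_i · max(b_i, a_i + x)| ≤ ε. That is, finite linear combinations of one-dimensional tropical units σ^tr(x) = max(b, a + x) uniformly approximate every continuous function on a compact interval. -/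
/-!
On all of `ℝ`, the span of the tropical units contains the constants, since
`max r (r + x) - max 0 x = r`, and the hinges `max t x`; hence it contains every ramp
`max p x - max q x`, which is constant outside `[p, q]` and of slope one inside. Adding ramps
from left to right along a grid builds the piecewise linear interpolant of `f`, and on a grid
finer than the modulus of uniform continuity of `f` for `ε / 2` the interpolant is `ε`-close
to `f`.
-/

open Set

noncomputable def tropicalUnit (a b : ℝ) : ℝ → ℝ := fun x => max b (a + x)

def tropicalSpan : Submodule ℝ (ℝ → ℝ) :=
  Submodule.span ℝ (range fun p : ℝ × ℝ => tropicalUnit p.1 p.2)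

lemma tropicalUnit_mem_tropicalSpan (a b : ℝ) : tropicalUnit a b ∈ tropicalSpan :=
  Submodule.subset_span ⟨(a, b), rfl⟩

lemma max_mem_tropicalSpan (t : ℝ) : (fun x => max t x) ∈ tropicalSpan := by
  have hunit : tropicalUnit 0 t = fun x => max t x := funext fun x => by simp [tropicalUnit]
  exact hunit ▸ tropicalUnit_mem_tropicalSpan 0 t

lemma const_mem_tropicalSpan (r : ℝ) : (fun _ => r) ∈ tropicalSpan := by
  have hconst : (fun _ : ℝ => r) = tropicalUnit r r - tropicalUnit 0 0 := by
    funext x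
    simp only [Pi.sub_apply, tropicalUnit, zero_add]
    have hshift : max (r + 0) (r + x) = r + max 0 x := max_add_add_left r 0 x
    rw [add_zero] at hshift
    linarith
  rw [hconst]
  exact sub_mem (tropicalUnit_mem_tropicalSpan r r) (tropicalUnit_mem_tropicalSpan 0 0)

lemma exists_eq_sum_of_mem_tropicalSpan {g : ℝ → ℝ} (hg : g ∈ tropicalSpan) :
    ∃ (N : ℕ) (β b a : Fin N → ℝ), ∀ x, g x = ∑ i, β i * max (b i) (a i + x) := by
  obtain ⟨N, β, u, rfl⟩ := Submodule.mem_span_set'.mp hg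
  choose p hp using fun i => (u i).2
  refine ⟨N, β, fun i => (p i).2, fun i => (p i).1, fun x => ?_⟩
  simp [Finset.sum_apply, ← hp, tropicalUnit]

lemma abs_sub_lineInterpolation_le {f : ℝ → ℝ} {p q x ε : ℝ} (hx : x ∈ Icc p q)
    (hosc : ∀ y ∈ Icc p q, |f y - f p| ≤ ε / 2) :
    |f x - (f p + (f q - f p) / (q - p) * (x - p))| ≤ ε := by
  have hratio_nonneg : 0 ≤ (x - p) / (q - p) :=
    div_nonneg (by linarith [hx.1]) (by linarith [hx.1, hx.2])
  have hratio_le_one : (x - p) / (q - p) ≤ 1 :=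
    div_le_one_of_le₀ (by linarith [hx.2]) (by linarith [hx.1, hx.2])
  calc |f x - (f p + (f q - f p) / (q - p) * (x - p))|
      = |(f x - f p) - (f q - f p) * ((x - p) / (q - p))| := by
        congr 1
        ring
    _ ≤ |f x - f p| + |(f q - f p) * ((x - p) / (q - p))| := abs_sub _ _
    _ = |f x - f p| + |f q - f p| * ((x - p) / (q - p)) := by
        rw [abs_mul, abs_of_nonneg hratio_nonneg]
    _ ≤ ε / 2 + ε / 2 * 1 := by
        gcongr
        exacts [hosc x hx, (abs_nonneg _).trans (hosc x hx), hosc q ⟨hx.1.trans hx.2, le_rfl⟩]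
    _ = ε := by ring

/-- The invariant of the left-to-right construction: `g` is `ε`-close to `f` on `[c, p]` and
equal to `f p` from `p` on. Adding a multiple of the ramp from `p` to `q` moves it to `q`. -/
lemma exists_mem_tropicalSpan_extend {f g : ℝ → ℝ} {c p q ε : ℝ} (hg : g ∈ tropicalSpan)
    (hpq : p ≤ q) (happrox : ∀ x ∈ Icc c p, |f x - g x| ≤ ε) (hflat : ∀ x, p ≤ x → g x = f p)
    (hosc : ∀ x ∈ Icc p q, |f x - f p| ≤ ε / 2) :
    ∃ g' ∈ tropicalSpan, (∀ x ∈ Icc c q, |f x - g' x| ≤ ε) ∧ ∀ x, q ≤ x → g' x = f q := by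
  set s := (f q - f p) / (q - p)
  refine ⟨g + s • ((fun x => max p x) - (fun x => max q x) + fun _ => q - p), ?_, ?_, ?_⟩
  · exact add_mem hg <| Submodule.smul_mem _ _ <|
      add_mem (sub_mem (max_mem_tropicalSpan p) (max_mem_tropicalSpan q))
        (const_mem_tropicalSpan _)
  · intro x hx
    rcases le_total x p with hxp | hpx
    · have hramp : max p x - max q x + (q - p) = 0 := by
        rw [max_eq_left hxp, max_eq_left (hxp.trans hpq)]
        ring
      simpa only [Pi.add_apply, Pi.smul_apply, Pi.sub_apply, smul_eq_mul, hramp, mul_zero,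
        add_zero] using happrox x ⟨hx.1, hxp⟩
    · simp only [Pi.add_apply, Pi.smul_apply, Pi.sub_apply, smul_eq_mul, max_eq_right hpx,
        max_eq_left hx.2, hflat x hpx]
      convert abs_sub_lineInterpolation_le ⟨hpx, hx.2⟩ hosc using 3
      ring
  · intro x hqx
    have hpx := hpq.trans hqx
    simp only [Pi.add_apply, Pi.smul_apply, Pi.sub_apply, smul_eq_mul, max_eq_right hpx,
      max_eq_right hqx, hflat x hpx, sub_self, zero_add, s]
    rw [div_mul_cancel_of_imp fun hqp => by rw [sub_eq_zero.mp hqp, sub_self]]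
    ring

lemma exists_mem_tropicalSpan_near_of_grid {f : ℝ → ℝ} {X : ℕ → ℝ} {ε : ℝ} (hε : 0 ≤ ε)
    (hX : Monotone X) (n : ℕ)
    (hosc : ∀ k < n, ∀ x ∈ Icc (X k) (X (k + 1)), |f x - f (X k)| ≤ ε / 2) :
    ∃ g ∈ tropicalSpan,
      (∀ x ∈ Icc (X 0) (X n), |f x - g x| ≤ ε) ∧ ∀ x, X n ≤ x → g x = f (X n) := by
  induction n with
  | zero =>
    refine ⟨fun _ => f (X 0), const_mem_tropicalSpan _, fun x hx => ?_, fun _ _ => rfl⟩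
    simp [le_antisymm hx.2 hx.1, hε]
  | succ n ih =>
    obtain ⟨g, hg, happrox, hflat⟩ := ih fun k hk => hosc k (by omega)
    exact exists_mem_tropicalSpan_extend hg (hX n.le_succ) happrox hflat (hosc n n.lt_succ_self)

lemma exists_monotone_grid {c d δ : ℝ} (hcd : c ≤ d) (hδ : 0 < δ) :
    ∃ (n : ℕ) (X : ℕ → ℝ), Monotone X ∧ X 0 = c ∧ X n = d ∧ ∀ k, X (k + 1) - X k ≤ δ := by
  obtain ⟨n, hn⟩ := exists_nat_gt ((d - c) / δ)
  have hn_pos : (0 : ℝ) < n := (div_nonneg (sub_nonneg.2 hcd) hδ.le).trans_lt hn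
  have hmesh_nonneg : 0 ≤ (d - c) / n := div_nonneg (sub_nonneg.2 hcd) hn_pos.le
  refine ⟨n, fun k => c + k * ((d - c) / n), fun i j hij => ?_, by simp, ?_, fun k => ?_⟩
  · dsimp only
    gcongr
  · field_simp
    ring
  · rw [div_lt_iff₀ hδ] at hn
    push_cast
    rw [show c + (k + 1) * ((d - c) / n) - (c + k * ((d - c) / n)) = (d - c) / n by ring,
      div_le_iff₀ hn_pos]
    linarith

lemma exists_mem_tropicalSpan_near {f : ℝ → ℝ} {c d ε : ℝ} (hf : ContinuousOn f (Icc c d))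
    (hε : 0 < ε) : ∃ g ∈ tropicalSpan, ∀ x ∈ Icc c d, |f x - g x| ≤ ε := by
  rcases lt_or_ge d c with hdc | hcd
  · exact ⟨0, zero_mem _, fun x hx => absurd (hx.1.trans hx.2) hdc.not_ge⟩
  obtain ⟨δ, hδ, hmod⟩ := Metric.uniformContinuousOn_iff_le.mp
    (isCompact_Icc.uniformContinuousOn_of_continuous hf) (ε / 2) (half_pos hε)
  obtain ⟨n, X, hX, hX0, hXn, hmesh⟩ := exists_monotone_grid hcd hδ
  have hmem : ∀ k ≤ n, X k ∈ Icc c d := fun k hk => ⟨hX0 ▸ hX k.zero_le, hXn ▸ hX hk⟩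
  obtain ⟨g, hg, happrox, -⟩ := exists_mem_tropicalSpan_near_of_grid hε.le hX n
    fun k hk x hx => by
      have hdist : dist x (X k) ≤ δ := by
        rw [Real.dist_eq, abs_of_nonneg (by linarith [hx.1])]
        linarith [hx.2, hmesh k]
      simpa [Real.dist_eq] using hmod x ⟨(hmem k hk.le).1.trans hx.1,
        hx.2.trans (hmem (k + 1) hk).2⟩ (X k) (hmem k hk.le) hdist
  exact ⟨g, hg, hX0 ▸ hXn ▸ happrox⟩

theorem tropical_unit_universal_approximation_general (c d : ℝ)
    (f : ℝ → ℝ) (hf : ContinuousOn f (Set.Icc c d)) (ε : ℝ) (hε : 0 < ε) :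
    ∃ (N : ℕ) (β b a : Fin N → ℝ),
      ∀ x ∈ Set.Icc c d, |f x - ∑ i, β i * max (b i) (a i + x)| ≤ ε := by
  obtain ⟨g, hg, hnear⟩ := exists_mem_tropicalSpan_near hf hε
  obtain ⟨N, β, b, a, hsum⟩ := exists_eq_sum_of_mem_tropicalSpan hg
  exact ⟨N, β, b, a, fun x hx => hsum x ▸ hnear x hx⟩

/-- Finite linear combinations of one-dimensional tropical units
`σ^tr(x) = max (b, a + x)` uniformly approximate every continuous function on
a compact interval `[c, d]`. -/
theorem tropical_unit_universal_approximation (c d : ℝ) (hcd : c < d)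
    (f : ℝ → ℝ) (hf : ContinuousOn f (Set.Icc c d)) (ε : ℝ) (hε : 0 < ε) :
    ∃ (N : ℕ) (β b a : Fin N → ℝ),
      ∀ x ∈ Set.Icc c d, |f x - ∑ i, β i * max (b i) (a i + x)| ≤ ε :=
  tropical_unit_universal_approximation_general c d f hf ε hε
end
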